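/- arXiv:2501.18069 — 3 statements merged into one kernel-verified Lean document; each statement's English description precedes it below -/
import Mathlib

section
/- Let {g_b}_{b∈B} be a finite family of real symmetric matrices indexed by a finite nonempty type, let G = ∑_{b∈B} g_b, and assume G is frustration-free, i.e. λ(G) = ∑_{b∈B} λ(g_b). Then the (unnormalized) L1 adaptive loss bounds the gap negativity from above: ∑_{b∈B} (λ(g_b⁺) − λ(g_b)) ≥ λ(G⁺) − λ(G) ≥ 0. -/
open Matrix Finset

/-- The largest eigenvalue of a Hermitian matrix. -/
noncomputable def maxEig {𝕜 : Type*} [RCLike 𝕜] {n : Type*} [Fintype n] [DecidableEq n]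
    {A : Matrix n n 𝕜} (hA : A.IsHermitian) : ℝ := ⨆ i, hA.eigenvalues i

/-- The stoquastic of a real matrix: keep the diagonal, take absolute values off-diagonal. -/
def stoq {n : Type*} [DecidableEq n] (A : Matrix n n ℝ) : Matrix n n ℝ :=
  fun i j => if i = j then A i j else |A i j|

lemma stoq_isHermitian {n : Type*} [Fintype n] [DecidableEq n] {A : Matrix n n ℝ}
    (hA : A.IsHermitian) : (stoq A).IsHermitian := by
  ext i j
  by_cases h : i = j
  · subst h; simp [stoq, Matrix.conjTranspose_apply]
  · have := hA.apply i j
    simp only [Matrix.conjTranspose_apply, stoq, h, Ne.symm h, if_false, star_trivial] at *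
    rw [this]

lemma isHermitian_sum {𝕜 : Type*} [RCLike 𝕜] {n B : Type*} [Fintype n] [Fintype B]
    (g : B → Matrix n n 𝕜) (hg : ∀ b, (g b).IsHermitian) : (∑ b, g b).IsHermitian := by
  unfold Matrix.IsHermitian
  rw [Matrix.conjTranspose_sum]
  exact Finset.sum_congr rfl fun b _ => (hg b).eq

/-!
Both bounds come from the Rayleigh principle `λ(A) = max_{vᵀv = 1} vᵀ A v`. Passing from `v` to
`|v|` and from `A` to `A⁺` can only increase `vᵀ A v`, which gives `λ(A) ≤ λ(A⁺)`. If `v` is a unit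
top eigenvector of `G⁺`, then, since `|v| ≥ 0` and `|∑ b, x b| ≤ ∑ b, |x b|` entrywise,
`λ(G⁺) ≤ |v|ᵀ G⁺ |v| ≤ ∑ b, |v|ᵀ g_b⁺ |v| ≤ ∑ b, λ(g_b⁺)`; frustration-freeness turns this into
the bound on the gap negativity.
-/

section DotProduct

variable {n : Type*} [Fintype n]

theorem dotProduct_diagonal_mulVec_le [DecidableEq n] {d : n → ℝ} {c : ℝ} (hd : ∀ i, d i ≤ c)
    (y : n → ℝ) : y ⬝ᵥ diagonal d *ᵥ y ≤ c * (y ⬝ᵥ y) := by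
  simp only [mulVec_diagonal, dotProduct, mul_sum]
  exact sum_le_sum fun i _ => by nlinarith [hd i, mul_self_nonneg (y i)]

theorem dotProduct_mulVec_mono {R : Type*} [Semiring R] [PartialOrder R] [IsOrderedRing R]
    {u w : n → R} (hu : 0 ≤ u) (hw : 0 ≤ w) {M N : Matrix n n R} (hMN : ∀ i j, M i j ≤ N i j) :
    u ⬝ᵥ M *ᵥ w ≤ u ⬝ᵥ N *ᵥ w := by
  simp only [dotProduct, mulVec]
  gcongr with i _ j _
  exacts [hu i, hw j, hMN i j]

theorem abs_dotProduct_abs (x : n → ℝ) : |x| ⬝ᵥ |x| = x ⬝ᵥ x :=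
  sum_congr rfl fun i _ => abs_mul_abs_self (x i)

end DotProduct

namespace Matrix.IsHermitian

variable {n : Type*} [Fintype n] [DecidableEq n]

theorem eigenvalues_le_maxEig {𝕜 : Type*} [RCLike 𝕜] {A : Matrix n n 𝕜} (hA : A.IsHermitian)
    (i : n) : hA.eigenvalues i ≤ maxEig hA :=
  le_ciSup (Set.finite_range _).bddAbove i

theorem dotProduct_mulVec_le_maxEig_mul {A : Matrix n n ℝ} (hA : A.IsHermitian) (x : n → ℝ) :
    x ⬝ᵥ A *ᵥ x ≤ maxEig hA * (x ⬝ᵥ x) := by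
  set U : Matrix n n ℝ := (hA.eigenvectorUnitary : Matrix n n ℝ)
  have hUUt : U * Uᵀ = 1 := by
    simpa [U, star_eq_conjTranspose] using Unitary.coe_mul_star_self hA.eigenvectorUnitary
  have hA' : A = U * diagonal hA.eigenvalues * Uᵀ := by
    conv_lhs => rw [hA.spectral_theorem]
    simp [U, Unitary.conjStarAlgAut_apply, star_eq_conjTranspose]
  calc x ⬝ᵥ A *ᵥ x = (Uᵀ *ᵥ x) ⬝ᵥ diagonal hA.eigenvalues *ᵥ (Uᵀ *ᵥ x) := by
        conv_lhs => rw [hA']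
        rw [← mulVec_mulVec, ← mulVec_mulVec, dotProduct_mulVec, mulVec_transpose]
    _ ≤ maxEig hA * ((Uᵀ *ᵥ x) ⬝ᵥ (Uᵀ *ᵥ x)) :=
        dotProduct_diagonal_mulVec_le hA.eigenvalues_le_maxEig _
    _ = maxEig hA * (x ⬝ᵥ x) := by
        rw [dotProduct_mulVec, vecMul_transpose, mulVec_mulVec, hUUt, one_mulVec]

theorem exists_dotProduct_self_eq_one_and_mulVec_eq_maxEig [Nonempty n] {A : Matrix n n ℝ}
    (hA : A.IsHermitian) : ∃ v : n → ℝ, v ⬝ᵥ v = 1 ∧ v ⬝ᵥ A *ᵥ v = maxEig hA := by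
  obtain ⟨i, hi⟩ := Finite.exists_max hA.eigenvalues
  have hmax : hA.eigenvalues i = maxEig hA :=
    le_antisymm (hA.eigenvalues_le_maxEig i) (ciSup_le hi)
  have hunit : ⇑(hA.eigenvectorBasis i) ⬝ᵥ ⇑(hA.eigenvectorBasis i) = 1 := by
    have h := orthonormal_iff_ite.mp hA.eigenvectorBasis.orthonormal i i
    rw [if_pos rfl, EuclideanSpace.inner_eq_star_dotProduct] at h
    simpa [dotProduct_comm] using h
  refine ⟨hA.eigenvectorBasis i, hunit, ?_⟩
  rw [mulVec_eigenvectorBasis, dotProduct_smul, hunit, smul_eq_mul, mul_one, hmax]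

end Matrix.IsHermitian

section Stoquastic

variable {n : Type*} [DecidableEq n]

theorem stoq_stoq (A : Matrix n n ℝ) : stoq (stoq A) = stoq A := by
  ext i j
  by_cases h : i = j <;> simp [stoq, h]

theorem stoq_sum_apply_le {B : Type*} (s : Finset B) (M : B → Matrix n n ℝ) (i j : n) :
    stoq (∑ b ∈ s, M b) i j ≤ (∑ b ∈ s, stoq (M b)) i j := by
  by_cases h : i = j
  · simp [stoq, h, Matrix.sum_apply]
  · simpa [stoq, h, Matrix.sum_apply] using abs_sum_le_sum_abs (fun b => M b i j) s

variable [Fintype n]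

theorem dotProduct_mulVec_le_stoq_abs (A : Matrix n n ℝ) (x : n → ℝ) :
    x ⬝ᵥ A *ᵥ x ≤ |x| ⬝ᵥ stoq A *ᵥ |x| := by
  simp only [dotProduct, mulVec, mul_sum, Pi.abs_apply]
  refine sum_le_sum fun i _ => sum_le_sum fun j _ => ?_
  by_cases h : i = j
  · subst h
    simp only [stoq, if_true]
    exact le_of_eq (by linear_combination (-A i i) * abs_mul_abs_self (x i))
  · simp only [stoq, if_neg h]
    calc x i * (A i j * x j) ≤ |x i * (A i j * x j)| := le_abs_self _
      _ = |x i| * (|A i j| * |x j|) := by rw [abs_mul, abs_mul]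

variable [Nonempty n]

theorem maxEig_le_maxEig_stoq {A : Matrix n n ℝ} (hA : A.IsHermitian) :
    maxEig hA ≤ maxEig (stoq_isHermitian hA) := by
  obtain ⟨v, hv, hAv⟩ := hA.exists_dotProduct_self_eq_one_and_mulVec_eq_maxEig
  calc maxEig hA = v ⬝ᵥ A *ᵥ v := hAv.symm
    _ ≤ |v| ⬝ᵥ stoq A *ᵥ |v| := dotProduct_mulVec_le_stoq_abs A v
    _ ≤ maxEig (stoq_isHermitian hA) * (|v| ⬝ᵥ |v|) :=
        (stoq_isHermitian hA).dotProduct_mulVec_le_maxEig_mul _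
    _ = maxEig (stoq_isHermitian hA) := by rw [abs_dotProduct_abs, hv, mul_one]

theorem maxEig_stoq_sum_le_sum_maxEig_stoq {B : Type*} [Fintype B] (g : B → Matrix n n ℝ)
    (hg : ∀ b, (g b).IsHermitian) :
    maxEig (stoq_isHermitian (isHermitian_sum g hg)) ≤ ∑ b, maxEig (stoq_isHermitian (hg b)) := by
  obtain ⟨v, hv, hGv⟩ :=
    (stoq_isHermitian (isHermitian_sum g hg)).exists_dotProduct_self_eq_one_and_mulVec_eq_maxEig
  calc maxEig (stoq_isHermitian (isHermitian_sum g hg))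
      = v ⬝ᵥ stoq (∑ b, g b) *ᵥ v := hGv.symm
    _ ≤ |v| ⬝ᵥ stoq (∑ b, g b) *ᵥ |v| := by
        simpa only [stoq_stoq] using dotProduct_mulVec_le_stoq_abs (stoq (∑ b, g b)) v
    _ ≤ |v| ⬝ᵥ (∑ b, stoq (g b)) *ᵥ |v| :=
        dotProduct_mulVec_mono (abs_nonneg v) (abs_nonneg v) (stoq_sum_apply_le _ g)
    _ = ∑ b, |v| ⬝ᵥ stoq (g b) *ᵥ |v| := by rw [sum_mulVec, dotProduct_sum]
    _ ≤ ∑ b, maxEig (stoq_isHermitian (hg b)) * (|v| ⬝ᵥ |v|) :=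
        sum_le_sum fun b _ => (stoq_isHermitian (hg b)).dotProduct_mulVec_le_maxEig_mul _
    _ = ∑ b, maxEig (stoq_isHermitian (hg b)) := by simp only [abs_dotProduct_abs, hv, mul_one]

end Stoquastic

/-- **The L1 adaptive loss bounds the gap negativity.** If `G = ∑ b, g b` is
frustration-free, then
`∑ b (λ(g b⁺) − λ(g b)) ≥ λ(G⁺) − λ(G) ≥ 0`. -/
theorem l1AdaptiveLoss_bounds_gapNegativity
    {n B : Type*} [Fintype n] [DecidableEq n] [Nonempty n] [Fintype B]
    (g : B → Matrix n n ℝ) (hg : ∀ b, (g b).IsHermitian)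
    (hff : maxEig (isHermitian_sum g hg) = ∑ b, maxEig (hg b)) :
    maxEig (stoq_isHermitian (isHermitian_sum g hg)) - maxEig (isHermitian_sum g hg) ≤
        ∑ b, (maxEig (stoq_isHermitian (hg b)) - maxEig (hg b)) ∧
      0 ≤ maxEig (stoq_isHermitian (isHermitian_sum g hg)) - maxEig (isHermitian_sum g hg) := by
  rw [sum_sub_distrib, ← hff]
  exact ⟨sub_le_sub_right (maxEig_stoq_sum_le_sum_maxEig_stoq g hg) _,
    sub_nonneg.mpr (maxEig_le_maxEig_stoq _)⟩
end

section
/- Let G be a real symmetric matrix indexed by a finite nonempty type, let G⁺ be its stoquastic, and let β ≥ 0. Then 0 < Tr exp(βG) ≤ Tr exp(βG⁺); equivalently, the average-sign ratio Tr exp(βG⁺)/Tr exp(βG) is at least 1. -/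
open Matrix Finset

/-!
Every term of the exponential series of `G + c` is entrywise dominated in absolute value by
the corresponding term for `G⁺ + c`, once the scalar `c` makes the diagonal of `G + c`
nonnegative; summing gives `Tr exp(G + c) ≤ Tr exp(G⁺ + c)`, and the factor `exp c` cancels.
Positivity holds because `exp(βG) = exp(βG/2)ᴴ exp(βG/2)` is positive definite.
-/

open scoped Nat ComplexOrder

namespace Matrix

variable {n : Type*} [Fintype n] [DecidableEq n]

theorem IsHermitian.posDef_exp {𝕜 : Type*} [RCLike 𝕜] {A : Matrix n n 𝕜} (hA : A.IsHermitian) :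
    (NormedSpace.exp A).PosDef := by
  set B := NormedSpace.exp ((1 / 2 : ℝ) • A)
  have hB : Bᴴ = B := (hA.smul (IsSelfAdjoint.all _)).exp
  have hexp : NormedSpace.exp A = Bᴴ * B := by
    rw [hB, ← exp_add_of_commute _ _ (Commute.refl _), ← add_smul]
    norm_num
  rw [hexp]
  exact .conjTranspose_mul_self B (mulVec_injective_iff_isUnit.mpr (isUnit_exp _))

theorem abs_pow_apply_le_of_abs_le {R : Type*} [Ring R] [LinearOrder R] [IsStrictOrderedRing R]
    {M N : Matrix n n R} (h : ∀ i j, |M i j| ≤ N i j) (k : ℕ) (i j : n) :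
    |(M ^ k) i j| ≤ (N ^ k) i j := by
  induction k generalizing j with
  | zero => rcases eq_or_ne i j with rfl | hij <;> simp [*]
  | succ k ih =>
    rw [pow_succ, pow_succ, mul_apply, mul_apply]
    refine (abs_sum_le_sum_abs _ _).trans (sum_le_sum fun l _ => ?_)
    rw [abs_mul]
    exact mul_le_mul (ih l) (h l j) (abs_nonneg _) ((abs_nonneg _).trans (ih l))

theorem hasSum_exp_apply (M : Matrix n n ℝ) (i j : n) :
    HasSum (fun k : ℕ => (k !⁻¹ : ℝ) * (M ^ k) i j) (NormedSpace.exp M i j) := by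
  let : NormedRing (Matrix n n ℝ) := Matrix.linftyOpNormedRing
  let : NormedAlgebra ℝ (Matrix n n ℝ) := Matrix.linftyOpNormedAlgebra
  exact Pi.hasSum.mp (Pi.hasSum.mp (NormedSpace.exp_series_hasSum_exp' (𝕂 := ℝ) M) i) j

theorem abs_exp_apply_le_of_abs_le {M N : Matrix n n ℝ} (h : ∀ i j, |M i j| ≤ N i j)
    (i j : n) : |NormedSpace.exp M i j| ≤ NormedSpace.exp N i j := by
  refine (hasSum_exp_apply M i j).norm_le_of_bounded (hasSum_exp_apply N i j) fun k => ?_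
  rw [Real.norm_eq_abs, abs_mul, abs_of_nonneg (by positivity)]
  exact mul_le_mul_of_nonneg_left (abs_pow_apply_le_of_abs_le h k i j) (by positivity)

theorem trace_exp_le_trace_exp_of_abs_le {M N : Matrix n n ℝ} (h : ∀ i j, |M i j| ≤ N i j) :
    (NormedSpace.exp M).trace ≤ (NormedSpace.exp N).trace :=
  sum_le_sum fun i _ => (le_abs_self _).trans (abs_exp_apply_le_of_abs_le h i i)

theorem exp_add_smul_one (A : Matrix n n ℝ) (r : ℝ) :
    NormedSpace.exp (A + r • 1) = Real.exp r • NormedSpace.exp A := by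
  let : NormedRing (Matrix n n ℝ) := Matrix.linftyOpNormedRing
  let : NormedAlgebra ℝ (Matrix n n ℝ) := Matrix.linftyOpNormedAlgebra
  have hscalar : NormedSpace.exp (r • 1 : Matrix n n ℝ) = Real.exp r • 1 := by
    simp only [← Algebra.algebraMap_eq_smul_one, Real.exp_eq_exp_ℝ]
    exact (NormedSpace.algebraMap_exp_comm r).symm
  rw [exp_add_of_commute _ _ ((Commute.one_right A).smul_right r), hscalar, mul_smul_one]

theorem trace_exp_le_trace_exp_of_diag_le_of_abs_le {M N : Matrix n n ℝ}
    (hdiag : ∀ i, M i i ≤ N i i) (hoff : ∀ i j, i ≠ j → |M i j| ≤ N i j) :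
    (NormedSpace.exp M).trace ≤ (NormedSpace.exp N).trace := by
  obtain ⟨c, hc⟩ := (Set.finite_range fun i => M i i).bddBelow
  have hshift : ∀ i j, |(M + (-c) • 1) i j| ≤ (N + (-c) • 1) i j := by
    intro i j
    rcases eq_or_ne i j with rfl | hij
    · have hMc : 0 ≤ M i i - c := sub_nonneg.mpr (hc ⟨i, rfl⟩)
      simpa [← sub_eq_add_neg, abs_of_nonneg hMc] using hdiag i
    · simpa [one_apply_ne hij] using hoff i j hij
  have hle := trace_exp_le_trace_exp_of_abs_le hshift
  rwa [exp_add_smul_one, exp_add_smul_one, trace_smul, trace_smul, smul_eq_mul, smul_eq_mul,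
    mul_le_mul_iff_right₀ (Real.exp_pos _)] at hle

end Matrix

theorem stoq_smul_of_nonneg {n : Type*} [DecidableEq n] {β : ℝ} (hβ : 0 ≤ β)
    (A : Matrix n n ℝ) : stoq (β • A) = β • stoq A := by
  ext i j
  by_cases hij : i = j <;> simp [stoq, hij, abs_mul, abs_of_nonneg hβ]

theorem trace_exp_le_trace_exp_stoq {n : Type*} [Fintype n] [DecidableEq n]
    (A : Matrix n n ℝ) : (NormedSpace.exp A).trace ≤ (NormedSpace.exp (stoq A)).trace :=
  trace_exp_le_trace_exp_of_diag_le_of_abs_le (fun i => by simp [stoq])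
    fun i j hij => by simp [stoq, hij]

/-- **Trace inequality for the stoquastic.** For a real symmetric matrix `G` and `β ≥ 0`,
we have `0 < Tr exp(βG) ≤ Tr exp(βG⁺)`; equivalently the average-sign ratio
`Tr exp(βG⁺)/Tr exp(βG)` is at least 1. -/
theorem trace_exp_pos_and_le_trace_exp_stoq {n : Type*} [Fintype n] [DecidableEq n] [Nonempty n]
    {G : Matrix n n ℝ} (hG : G.IsHermitian) (β : ℝ) (hβ : 0 ≤ β) :
    0 < (NormedSpace.exp (β • G)).trace ∧
      (NormedSpace.exp (β • G)).trace ≤ (NormedSpace.exp (β • stoq G)).trace :=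
  ⟨(hG.smul (IsSelfAdjoint.all β)).posDef_exp.trace_pos,
    stoq_smul_of_nonneg hβ G ▸ trace_exp_le_trace_exp_stoq (β • G)⟩
end

section
/- Let G be a real symmetric matrix indexed by a finite nonempty type and let G⁺ be its stoquastic. Then (1/β)·log(Tr exp(βG⁺)/Tr exp(βG)) converges as β → ∞ to the gap negativity η′ = λ(G⁺) − λ(G), where λ denotes the largest eigenvalue. In particular, the inverse average sign Tr exp(βG⁺)/Tr exp(βG) grows like e^{β·η′} at low temperatures. -/
/-!
Diagonalising `G = U D U⋆` gives `Tr exp(βG) = ∑ᵢ exp(β λᵢ)`, and for `β > 0`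
`β · maxᵢ λᵢ ≤ log ∑ᵢ exp(β λᵢ) ≤ β · maxᵢ λᵢ + log N`, with `N` the dimension,
so `(1/β) log Tr exp(βG) → λ(G)`. Applied to `G⁺` and to `G`, this gives the limit of the
difference of the two logarithms, which is the logarithm of the quotient.
-/

open Matrix Finset

open Unitary Filter Topology

theorem RCLike.exp_ofReal {𝕜 : Type*} [RCLike 𝕜] (x : ℝ) :
    NormedSpace.exp (x : 𝕜) = (Real.exp x : 𝕜) := by
  rw [Real.exp_eq_exp_ℝ]
  exact (NormedSpace.map_exp (RCLike.ofRealAm (K := 𝕜)) RCLike.continuous_ofReal x).symm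

namespace Matrix

variable {n 𝕜 : Type*} [RCLike 𝕜] [Fintype n] [DecidableEq n]

theorem exp_conjStarAlgAut (u : unitary (Matrix n n 𝕜)) (A : Matrix n n 𝕜) :
    NormedSpace.exp (conjStarAlgAut 𝕜 _ u A) = conjStarAlgAut 𝕜 _ u (NormedSpace.exp A) := by
  simpa [conjStarAlgAut_apply] using exp_units_conj (Unitary.toUnits u) A

theorem IsHermitian.trace_exp_smul {A : Matrix n n 𝕜} (hA : A.IsHermitian) (β : ℝ) :
    (NormedSpace.exp (β • A)).trace = ∑ i, (Real.exp (β * hA.eigenvalues i) : 𝕜) := by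
  have hβA : β • A = conjStarAlgAut 𝕜 _ hA.eigenvectorUnitary
      (diagonal fun i => ((β * hA.eigenvalues i : ℝ) : 𝕜)) := by
    conv_lhs => rw [hA.spectral_theorem]
    rw [← algebraMap_smul 𝕜 β, ← map_smul, ← diagonal_smul]
    congr 2 with i
    simp
  rw [hβA, exp_conjStarAlgAut, conjStarAlgAut_apply, trace_mul_cycle, coe_star_mul_self, one_mul,
    exp_diagonal, trace_diagonal]
  simp only [Pi.coe_exp, RCLike.exp_ofReal]

end Matrix

namespace Real

variable {ι : Type*} [Fintype ι] [Nonempty ι] (x : ι → ℝ)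

theorem mul_iSup_le_log_sum_exp_mul (β : ℝ) : β * ⨆ i, x i ≤ log (∑ i, exp (β * x i)) := by
  obtain ⟨j, hj⟩ := exists_eq_ciSup_of_finite (f := x)
  rw [← hj, le_log_iff_exp_le (by positivity)]
  exact single_le_sum (f := fun i => exp (β * x i)) (fun i _ => (exp_pos _).le) (mem_univ j)

theorem log_sum_exp_mul_le {β : ℝ} (hβ : 0 ≤ β) :
    log (∑ i, exp (β * x i)) ≤ β * (⨆ i, x i) + log (Fintype.card ι) := by
  have hsum : ∑ i, exp (β * x i) ≤ Fintype.card ι * exp (β * ⨆ i, x i) := by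
    rw [← nsmul_eq_mul, ← card_univ, ← sum_const]
    gcongr with i
    exact le_ciSup (Set.finite_range x).bddAbove i
  calc log (∑ i, exp (β * x i))
      ≤ log (Fintype.card ι * exp (β * ⨆ i, x i)) := log_le_log (by positivity) hsum
    _ = β * (⨆ i, x i) + log (Fintype.card ι) := by
        rw [log_mul (by positivity) (exp_ne_zero _), log_exp, add_comm]

theorem tendsto_one_div_mul_log_sum_exp_mul_atTop :
    Tendsto (fun β : ℝ => (1 / β) * log (∑ i, exp (β * x i)))
      atTop (𝓝 (⨆ i, x i)) := by
  have hupper : Tendsto (fun β : ℝ => (⨆ i, x i) + log (Fintype.card ι) / β)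
      atTop (𝓝 (⨆ i, x i)) := by
    simpa using tendsto_const_nhds.add
      ((tendsto_const_nhds (x := log (Fintype.card ι))).div_atTop tendsto_id)
  refine tendsto_of_tendsto_of_tendsto_of_le_of_le' tendsto_const_nhds hupper ?_ ?_ <;>
    filter_upwards [eventually_gt_atTop 0] with β hβ <;>
    rw [one_div_mul_eq_div]
  · rw [le_div_iff₀ hβ, mul_comm]
    exact mul_iSup_le_log_sum_exp_mul x β
  · rw [div_le_iff₀ hβ, add_mul, div_mul_cancel₀ _ hβ.ne', mul_comm]
    exact log_sum_exp_mul_le x hβ.le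

end Real

namespace Matrix.IsHermitian

variable {n : Type*} [Fintype n] [DecidableEq n] [Nonempty n] {A : Matrix n n ℝ}

theorem trace_exp_smul_pos (hA : A.IsHermitian) (β : ℝ) :
    0 < (NormedSpace.exp (β • A)).trace := by
  rw [hA.trace_exp_smul]
  positivity

theorem tendsto_one_div_mul_log_trace_exp_smul_atTop (hA : A.IsHermitian) :
    Tendsto (fun β : ℝ => (1 / β) * Real.log (NormedSpace.exp (β • A)).trace)
      atTop (𝓝 (maxEig hA)) := by
  simpa only [hA.trace_exp_smul, RCLike.ofReal_real_eq_id, id, maxEig] using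
    Real.tendsto_one_div_mul_log_sum_exp_mul_atTop hA.eigenvalues

end Matrix.IsHermitian

/-- **Asymptotics of the inverse average sign.** For a real symmetric matrix `G` with
stoquastic `G⁺`, the quantity `(1/β)·log(Tr exp(βG⁺)/Tr exp(βG))` converges as
`β → ∞` to the gap negativity `η′ = λ(G⁺) − λ(G)`. -/
theorem tendsto_log_inverse_average_sign {n : Type*} [Fintype n] [DecidableEq n] [Nonempty n]
    {G : Matrix n n ℝ} (hG : G.IsHermitian) :
    Filter.Tendsto
      (fun β : ℝ => (1 / β) *
        Real.log ((NormedSpace.exp (β • stoq G)).trace / (NormedSpace.exp (β • G)).trace))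
      Filter.atTop (nhds (maxEig (stoq_isHermitian hG) - maxEig hG)) := by
  have hG' := stoq_isHermitian hG
  refine (hG'.tendsto_one_div_mul_log_trace_exp_smul_atTop.sub
    hG.tendsto_one_div_mul_log_trace_exp_smul_atTop).congr fun β => ?_
  rw [Real.log_div (hG'.trace_exp_smul_pos β).ne' (hG.trace_exp_smul_pos β).ne', mul_sub]
end
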